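/- Let r ∈ (-∞, 0), λ < 0, and let L : B(E,[0,∞]) → [0,∞] satisfy: (i) 1 - e^{-L(v_t)} = e^{rt} for all t ≥ 0, where v_t ∈ B(E,(0,∞]) are given functions; (ii) for each t, u ↦ 1 - e^{-L(u v_t)} is concave on [0,∞) with value 0 at u = 0; (iii) for every s ≥ 0 and ε > 0 there is T(s,ε) with (1-ε) v_{t+s} ≤ e^{λ s} v_t ≤ (1+ε) v_{t+s} pointwise for t > T(s,ε), and L is monotone. Then r ≥ λ. -/

import Mathlib

open scoped ENNReal

/-! Write `φ_t(u) = q(L(u v_t))`, concave on `[0, ∞)` with `φ_t(0) = 0` and `φ_t(1) = e^{rt}`.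
A concave function vanishing at `0` has `φ(u)/u` nonincreasing, so for large `t`
`e^λ e^{rt} ≤ φ_t(e^λ) ≤ φ_{t+1}(1 + ε) ≤ (1 + ε) e^{r(t+1)}`, the middle step by
monotonicity of `L` and `e^λ v_t ≤ (1 + ε) v_{t+1}`. Hence `e^λ ≤ (1 + ε) e^r` for all `ε > 0`. -/

open Set Real

theorem ConcaveOn.mul_le_map_mul {f : ℝ → ℝ} (hf : ConcaveOn ℝ (Ici 0) f) (h0 : 0 ≤ f 0)
    {s u : ℝ} (hs0 : 0 ≤ s) (hs1 : s ≤ 1) (hu : 0 ≤ u) : s * f u ≤ f (s * u) := by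
  have h := hf.2 (mem_Ici.2 hu) (mem_Ici.2 le_rfl) hs0 (sub_nonneg.2 hs1) (add_sub_cancel s 1)
  simp only [smul_eq_mul, mul_zero, add_zero] at h
  linarith [mul_nonneg (sub_nonneg.2 hs1) h0]

theorem ConcaveOn.map_mul_le {f : ℝ → ℝ} (hf : ConcaveOn ℝ (Ici 0) f) (h0 : 0 ≤ f 0)
    {c u : ℝ} (hc : 1 ≤ c) (hu : 0 ≤ u) : f (c * u) ≤ c * f u := by
  have hc0 : 0 < c := one_pos.trans_le hc
  have h := hf.mul_le_map_mul h0 (inv_nonneg.2 hc0.le) (inv_le_one_of_one_le₀ hc)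
    (mul_nonneg hc0.le hu)
  rwa [inv_mul_cancel_left₀ hc0.ne', inv_mul_le_iff₀ hc0] at h

theorem concaveOn_Ici_zero_of_forall {f : ℝ → ℝ}
    (h : ∀ u u' s : ℝ, 0 ≤ u → 0 ≤ u' → 0 ≤ s → s ≤ 1 →
      s * f u + (1 - s) * f u' ≤ f (s * u + (1 - s) * u')) :
    ConcaveOn ℝ (Ici 0) f := by
  refine ⟨convex_Ici 0, fun u hu u' hu' a b ha hb hab => ?_⟩
  obtain rfl : b = 1 - a := eq_sub_of_add_eq' hab
  exact h u u' a hu hu' ha (by linarith)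

theorem monotone_one_sub_exp_neg_toReal :
    Monotone fun x : ℝ≥0∞ => 1 - (if x = ∞ then 0 else Real.exp (-x.toReal)) := by
  intro x y hxy
  dsimp only
  by_cases hy : y = ∞
  · split_ifs <;> simp [exp_nonneg]
  · have hx : x ≠ ∞ := ne_top_of_le_ne_top hy hxy
    simp only [hx, hy, if_false, sub_le_sub_iff_left, exp_le_exp, neg_le_neg_iff]
    exact ENNReal.toReal_mono hy hxy

theorem le_of_concaveOn_of_forall_exists_le {lam r : ℝ} (hlam : lam ≤ 0) {φ : ℝ → ℝ → ℝ}
    (hconc : ∀ t > 0, ConcaveOn ℝ (Ici 0) (φ t)) (hzero : ∀ t > 0, 0 ≤ φ t 0)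
    (hone : ∀ t > 0, φ t 1 = exp (r * t))
    (hcomp : ∀ ε > 0, ∃ t > 0, φ t (exp lam) ≤ φ (t + 1) (1 + ε)) : lam ≤ r := by
  have key : ∀ ε > 0, exp lam ≤ (1 + ε) * exp r := by
    intro ε hε
    obtain ⟨t, ht, hcmp⟩ := hcomp ε hε
    have ht1 : t + 1 > 0 := by linarith
    refine le_of_mul_le_mul_right (?_ : _ ≤ _ * exp (r * t)) (exp_pos _)
    calc exp lam * exp (r * t) = exp lam * φ t 1 := by rw [hone t ht]
      _ ≤ φ t (exp lam * 1) :=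
        (hconc t ht).mul_le_map_mul (hzero t ht) (exp_nonneg _) (exp_le_one_iff.2 hlam) zero_le_one
      _ ≤ φ (t + 1) ((1 + ε) * 1) := by simpa only [mul_one] using hcmp
      _ ≤ (1 + ε) * φ (t + 1) 1 :=
        (hconc (t + 1) ht1).map_mul_le (hzero (t + 1) ht1) (by linarith) zero_le_one
      _ = (1 + ε) * exp r * exp (r * t) := by rw [hone _ ht1, mul_add, mul_one, exp_add]; ring
  rw [← exp_le_exp]
  refine le_of_forall_gt_imp_ge_of_dense fun x hx => ?_
  have h := key (x / exp r - 1) (sub_pos.2 ((one_lt_div (exp_pos r)).2 hx))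
  rwa [add_sub_cancel, div_mul_cancel₀ _ (exp_pos r).ne'] at h

theorem decay_rate_ge_lambda_general
    (E : Type*)
    (lam r : ℝ) (hlam : lam < 0)
    (v : ℝ → E → ℝ≥0∞)
    (L : (E → ℝ≥0∞) → ℝ≥0∞)
    (q : ℝ≥0∞ → ℝ)
    (hq : ∀ x : ℝ≥0∞, q x = 1 - (if x = ∞ then 0 else Real.exp (-x.toReal)))
    (hmono : ∀ f g : E → ℝ≥0∞, (∀ x, f x ≤ g x) → L f ≤ L g)
    (hi : ∀ t : ℝ, 0 < t → q (L (v t)) = Real.exp (r * t))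
    (hconc : ∀ t : ℝ, 0 < t → ∀ u u' s : ℝ, 0 ≤ u → 0 ≤ u' → 0 ≤ s → s ≤ 1 →
      s * q (L (fun x => ENNReal.ofReal u * v t x))
        + (1 - s) * q (L (fun x => ENNReal.ofReal u' * v t x))
      ≤ q (L (fun x => ENNReal.ofReal (s * u + (1 - s) * u') * v t x)))
    (hzero : ∀ t : ℝ, 0 < t → q (L (fun x => ENNReal.ofReal 0 * v t x)) = 0)
    (hiii : ∀ s : ℝ, 0 ≤ s → ∀ ε : ℝ, 0 < ε → ∃ T : ℝ, 0 < T ∧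
      ∀ t : ℝ, T < t → ∀ x : E,
        ENNReal.ofReal (1 - ε) * v (t + s) x
            ≤ ENNReal.ofReal (Real.exp (lam * s)) * v t x ∧
        ENNReal.ofReal (Real.exp (lam * s)) * v t x
            ≤ ENNReal.ofReal (1 + ε) * v (t + s) x) :
    lam ≤ r := by
  have hqmono : Monotone q := funext hq ▸ monotone_one_sub_exp_neg_toReal
  refine le_of_concaveOn_of_forall_exists_le
    (φ := fun t u => q (L fun x => ENNReal.ofReal u * v t x)) hlam.le
    (fun t ht => concaveOn_Ici_zero_of_forall (hconc t ht)) (fun t ht => (hzero t ht).ge)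
    (fun t ht => by simpa using hi t ht) fun ε hε => ?_
  obtain ⟨T, hT, hTv⟩ := hiii 1 zero_le_one ε hε
  refine ⟨T + 1, by linarith, hqmono (hmono _ _ fun x => ?_)⟩
  simpa using (hTv (T + 1) (by linarith) x).2

/-- Let `r < 0`, `λ < 0`, and let `L` be a monotone `[0,∞]`-valued functional
with `1 - e^{-L(v_t)} = e^{r t}` for given strictly positive functions `v_t`;
assume `u ↦ 1 - e^{-L(u v_t)}` is concave on `[0,∞)` with value `0` at
`u = 0`, and `e^{λ s} v_t ≈ v_{t+s}` up to `(1 ± ε)` for large `t`.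
Then `r ≥ λ`. -/
theorem decay_rate_ge_lambda
    (E : Type*)
    (lam r : ℝ) (hlam : lam < 0) (hr : r < 0)
    (v : ℝ → E → ℝ≥0∞) (hvpos : ∀ t : ℝ, 0 < t → ∀ x : E, 0 < v t x)
    (L : (E → ℝ≥0∞) → ℝ≥0∞)
    (q : ℝ≥0∞ → ℝ)
    (hq : ∀ x : ℝ≥0∞, q x = 1 - (if x = ∞ then 0 else Real.exp (-x.toReal)))
    (hmono : ∀ f g : E → ℝ≥0∞, (∀ x, f x ≤ g x) → L f ≤ L g)
    (hi : ∀ t : ℝ, 0 < t → q (L (v t)) = Real.exp (r * t))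
    (hconc : ∀ t : ℝ, 0 < t → ∀ u u' s : ℝ, 0 ≤ u → 0 ≤ u' → 0 ≤ s → s ≤ 1 →
      s * q (L (fun x => ENNReal.ofReal u * v t x))
        + (1 - s) * q (L (fun x => ENNReal.ofReal u' * v t x))
      ≤ q (L (fun x => ENNReal.ofReal (s * u + (1 - s) * u') * v t x)))
    (hzero : ∀ t : ℝ, 0 < t → q (L (fun x => ENNReal.ofReal 0 * v t x)) = 0)
    (hiii : ∀ s : ℝ, 0 ≤ s → ∀ ε : ℝ, 0 < ε → ∃ T : ℝ, 0 < T ∧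
      ∀ t : ℝ, T < t → ∀ x : E,
        ENNReal.ofReal (1 - ε) * v (t + s) x
            ≤ ENNReal.ofReal (Real.exp (lam * s)) * v t x ∧
        ENNReal.ofReal (Real.exp (lam * s)) * v t x
            ≤ ENNReal.ofReal (1 + ε) * v (t + s) x) :
    lam ≤ r :=
  decay_rate_ge_lambda_general E lam r hlam v L q hq hmono hi hconc hzero hiii
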